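/- arXiv:2006.08379 — 4 statements merged into one kernel-verified Lean document; each statement's English description precedes it below -/
import Mathlib

section
/- Let φ : [1,∞) → (0,∞) be Borel measurable and slowly varying at infinity in the sense of Karamata. Then for all real numbers 0 < a < b, the convergence φ(λt)/φ(t) → 1 as t → ∞ is uniform with respect to λ ∈ [a,b]; that is, sup_{λ ∈ [a,b]} |φ(λt)/φ(t) − 1| → 0 as t → ∞ (the suprema being taken over those t with λt ≥ 1 for all λ ∈ [a,b]). -/
/-!
With `h x = log φ (e ^ x)` the claim becomes: if `h` is measurable and `h (x + u) - h x → 0`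
for every `u`, the convergence is uniform for `u` in compact intervals. Pointwise convergence gives
convergence in measure on bounded sets, so for large `y` the set of `w ∈ [-R, R]` with
`|h (y + w) - h y| ≥ ε / 2` has measure `< 1 / 2`. If `|h (x + u) - h x| ≥ ε`, the triangle
inequality puts every `v ∈ [0, 1]` either in the exceptional set of `x` or, shifted by `-u`, in
that of `x + u`; translation invariance then bounds the length `1` of `[0, 1]` by `1 / 2 + 1 / 2`.
-/

open Filter Topology

/-- `φ : [1,∞) → (0,∞)` is slowly varying at infinity in the sense of Karamata:
`φ(λt)/φ(t) → 1` as `t → ∞` for every `λ > 0`. -/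
def SlowlyVarying (φ : ℝ → ℝ) : Prop :=
  ∀ l : ℝ, 0 < l → Tendsto (fun t : ℝ => φ (l * t) / φ t) atTop (𝓝 1)

/-- The class `M`: Borel measurable functions `φ : [1,∞) → (0,∞)` such that `φ` and `1/φ`
are bounded on each compact subset of `[1,∞)` and `φ` is slowly varying at infinity. -/
structure MemM (φ : ℝ → ℝ) : Prop where
  measurable : Measurable ((Set.Ici (1 : ℝ)).restrict φ)
  pos : ∀ t : ℝ, 1 ≤ t → 0 < φ t
  bddOnCompacts : ∀ K : Set ℝ, IsCompact K → K ⊆ Set.Ici 1 →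
    ∃ C : ℝ, ∀ t ∈ K, φ t ≤ C ∧ (φ t)⁻¹ ≤ C
  slowlyVarying : SlowlyVarying φ

open MeasureTheory Set
open scoped ENNReal

theorem tendstoInMeasure_of_tendsto_ae_of_isCountablyGenerated {α ι E : Type*}
    [MeasurableSpace α] [PseudoEMetricSpace E] {μ : Measure α} [IsFiniteMeasure μ]
    {l : Filter ι} [l.IsCountablyGenerated] {f : ι → α → E} {g : α → E}
    (hf : ∀ i, AEStronglyMeasurable (f i) μ)
    (hfg : ∀ᵐ x ∂μ, Tendsto (fun i => f i x) l (𝓝 (g x))) : TendstoInMeasure μ f l g :=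
  fun ε hε => tendsto_of_seq_tendsto fun x hx =>
    tendstoInMeasure_of_tendsto_ae (fun n => hf (x n))
      (hfg.mono fun _ hy => hy.comp hx) ε hε

lemma half_le_abs_sub_or_half_le_abs_sub {a b ε : ℝ} (hab : ε ≤ |a - b|) (c : ℝ) :
    ε / 2 ≤ |c - b| ∨ ε / 2 ≤ |c - a| := by
  by_contra! h
  linarith [abs_sub_le a c b, abs_sub_comm a c]

theorem eventually_volume_le_abs_add_sub_lt {h : ℝ → ℝ} (hm : Measurable h)
    (hpt : ∀ u, Tendsto (fun x => h (x + u) - h x) atTop (𝓝 0)) {K : Set ℝ}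
    (hK : MeasurableSet K) (hKfin : volume K ≠ ⊤) {η : ℝ} (hη : 0 < η) {δ : ℝ≥0∞}
    (hδ : 0 < δ) : ∀ᶠ y in atTop, volume ({w | η ≤ |h (y + w) - h y|} ∩ K) < δ := by
  have := isFiniteMeasure_restrict.2 hKfin
  have hconv : TendstoInMeasure (volume.restrict K) (fun y w => h (y + w) - h y) atTop 0 :=
    tendstoInMeasure_of_tendsto_ae_of_isCountablyGenerated
      (fun y => ((hm.comp (measurable_const_add y)).sub_const _).aestronglyMeasurable)
      (ae_of_all _ hpt)
  filter_upwards [(tendsto_order.1 (tendstoInMeasure_iff_dist.1 hconv η hη)).2 δ hδ] with y hy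
  simp only [Pi.zero_apply, Real.dist_eq, sub_zero] at hy
  rwa [Measure.restrict_apply' hK] at hy

theorem tendstoUniformlyOn_add_sub_of_measurable {h : ℝ → ℝ} (hm : Measurable h)
    (hpt : ∀ u, Tendsto (fun x => h (x + u) - h x) atTop (𝓝 0)) (A B : ℝ) :
    TendstoUniformlyOn (fun x u => h (x + u) - h x) 0 atTop (Icc A B) := by
  rw [Metric.tendstoUniformlyOn_iff]
  intro ε hε
  set R := |A| + |B| + 1
  set S : ℝ → Set ℝ := fun y => {w | ε / 2 ≤ |h (y + w) - h y|} ∩ Icc (-R) R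
  obtain ⟨X, hX⟩ := eventually_atTop.1 <| eventually_volume_le_abs_add_sub_lt hm hpt
    (K := Icc (-R) R) measurableSet_Icc measure_Icc_lt_top.ne (half_pos hε)
    (by norm_num : (0 : ℝ≥0∞) < 1 / 2)
  filter_upwards [eventually_ge_atTop (max X (X - A))] with x hx u hu
  rw [Pi.zero_apply, dist_comm, Real.dist_eq, sub_zero]
  by_contra! hbig
  have hcover : Icc 0 1 ⊆ S x ∪ (fun v => -u + v) ⁻¹' S (x + u) := by
    intro v hv
    have hvR : v ∈ Icc (-R) R := ⟨by linarith [hv.1, abs_nonneg A, abs_nonneg B], by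
      linarith [hv.2, abs_nonneg A, abs_nonneg B]⟩
    have hvuR : -u + v ∈ Icc (-R) R := ⟨by linarith [hv.1, hu.2, le_abs_self B, abs_nonneg A], by
      linarith [hv.2, hu.1, neg_abs_le A, abs_nonneg B]⟩
    rcases half_le_abs_sub_or_half_le_abs_sub hbig (h (x + v)) with hv' | hv'
    · exact Or.inl ⟨hv', hvR⟩
    · refine Or.inr ⟨?_, hvuR⟩
      show ε / 2 ≤ |h (x + u + (-u + v)) - h (x + u)|
      rwa [← add_assoc, add_neg_cancel_right]
  have hle : volume (Icc (0 : ℝ) 1) ≤ volume (S x) + volume (S (x + u)) := by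
    rw [← measure_preimage_add volume (-u) (S (x + u))]
    exact (measure_mono hcover).trans (measure_union_le _ _)
  have hlt := ENNReal.add_lt_add (hX x (le_of_max_le_left hx)) (hX (x + u) (by
    linarith [le_of_max_le_right hx, hu.1]))
  rw [ENNReal.add_halves] at hlt
  rw [Real.volume_Icc, sub_zero, ENNReal.ofReal_one] at hle
  exact (hle.trans_lt hlt).false

/-- `x ↦ log φ (e ^ x)`; the `max 1` keeps the argument in `[1, ∞)`, where `φ` is measurable and
positive. -/
noncomputable def logExpComp (φ : ℝ → ℝ) (x : ℝ) : ℝ :=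
  Real.log (φ (max 1 (Real.exp x)))

lemma measurable_logExpComp {φ : ℝ → ℝ} (hmeas : Measurable ((Ici (1 : ℝ)).domRestrict φ)) :
    Measurable (logExpComp φ) :=
  Real.measurable_log.comp <| hmeas.comp <|
    (measurable_const.max Real.measurable_exp).subtype_mk (p := (· ∈ Ici 1))
      (h := fun _ => mem_Ici.2 (le_max_left _ _))

lemma exp_logExpComp_add_sub {φ : ℝ → ℝ} (hpos : ∀ t : ℝ, 1 ≤ t → 0 < φ t) {x u : ℝ}
    (hx : 0 ≤ x) (hxu : 0 ≤ x + u) :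
    Real.exp (logExpComp φ (x + u) - logExpComp φ x) =
      φ (Real.exp u * Real.exp x) / φ (Real.exp x) := by
  have h1 : 1 ≤ Real.exp x := Real.one_le_exp hx
  have h2 : 1 ≤ Real.exp (x + u) := Real.one_le_exp hxu
  rw [logExpComp, logExpComp, max_eq_right h1, max_eq_right h2, Real.exp_sub,
    Real.exp_log (hpos _ h1), Real.exp_log (hpos _ h2), Real.exp_add, mul_comm]

lemma SlowlyVarying.tendsto_logExpComp_add_sub {φ : ℝ → ℝ} (hsv : SlowlyVarying φ)
    (hpos : ∀ t : ℝ, 1 ≤ t → 0 < φ t) (u : ℝ) :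
    Tendsto (fun x => logExpComp φ (x + u) - logExpComp φ x) atTop (𝓝 0) := by
  have hlog := ((hsv _ (Real.exp_pos u)).comp Real.tendsto_exp_atTop).log one_ne_zero
  rw [Real.log_one] at hlog
  refine hlog.congr' ?_
  filter_upwards [eventually_ge_atTop (max 0 (-u))] with x hx
  rw [Function.comp_apply, ← exp_logExpComp_add_sub hpos (le_of_max_le_left hx)
    (by linarith [le_of_max_le_right hx]), Real.log_exp]

theorem SlowlyVarying.tendstoUniformlyOn {φ : ℝ → ℝ}
    (hmeas : Measurable ((Ici (1 : ℝ)).domRestrict φ)) (hpos : ∀ t : ℝ, 1 ≤ t → 0 < φ t)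
    (hsv : SlowlyVarying φ) {a : ℝ} (ha : 0 < a) (b : ℝ) :
    TendstoUniformlyOn (fun t l => φ (l * t) / φ t) 1 atTop (Icc a b) := by
  have hunif := tendsto_prod_principal_iff.2 <| tendstoUniformlyOn_add_sub_of_measurable
    (measurable_logExpComp hmeas) (hsv.tendsto_logExpComp_add_sub hpos) (Real.log a) (Real.log b)
  have hlog : Tendsto (Prod.map Real.log Real.log) (atTop ×ˢ 𝓟 (Icc a b))
      (atTop ×ˢ 𝓟 (Icc (Real.log a) (Real.log b))) :=
    Real.tendsto_log_atTop.prodMap <| tendsto_principal_principal.2 fun l hl =>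
      ⟨Real.log_le_log ha hl.1, Real.log_le_log (ha.trans_le hl.1) hl.2⟩
  have hexp := ((Real.continuous_exp.tendsto 0).comp hunif).comp hlog
  rw [Real.exp_zero] at hexp
  refine tendsto_prod_principal_iff.1 (hexp.congr' (eventually_prod_principal_iff.2 ?_))
  filter_upwards [eventually_ge_atTop (max 1 a⁻¹)] with t ht l hl
  have ht0 : 0 < t := one_pos.trans_le (le_of_max_le_left ht)
  have hl0 : 0 < l := ha.trans_le hl.1
  have hlt : 1 ≤ l * t := calc
    1 = a * a⁻¹ := (mul_inv_cancel₀ ha.ne').symm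
    _ ≤ l * t := mul_le_mul hl.1 (le_of_max_le_right ht) (inv_nonneg.2 ha.le) hl0.le
  show Real.exp (logExpComp φ (Real.log t + Real.log l) - logExpComp φ (Real.log t)) =
    φ (l * t) / φ t
  rw [exp_logExpComp_add_sub hpos (Real.log_nonneg (le_of_max_le_left ht))
    (by rw [← Real.log_mul ht0.ne' hl0.ne', mul_comm]; exact Real.log_nonneg hlt),
    Real.exp_log ht0, Real.exp_log hl0]

theorem slowlyVarying_uniform_convergence_general (φ : ℝ → ℝ)
    (hmeas : Measurable ((Set.Ici (1 : ℝ)).restrict φ))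
    (hpos : ∀ t : ℝ, 1 ≤ t → 0 < φ t)
    (hsv : SlowlyVarying φ)
    (a b : ℝ) (ha : 0 < a) :
    ∀ ε : ℝ, 0 < ε → ∃ T : ℝ, ∀ t : ℝ, T ≤ t →
      ∀ l ∈ Set.Icc a b, |φ (l * t) / φ t - 1| < ε := by
  intro ε hε
  obtain ⟨T, hT⟩ := eventually_atTop.1 <|
    Metric.tendstoUniformlyOn_iff.1 (hsv.tendstoUniformlyOn hmeas hpos ha b) ε hε
  refine ⟨T, fun t ht l hl => ?_⟩
  simpa only [Pi.one_apply, dist_comm, Real.dist_eq] using hT t ht l hl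

/-- Uniform convergence theorem for slowly varying functions: if `φ : [1,∞) → (0,∞)` is Borel
measurable and slowly varying at infinity in the sense of Karamata, then for all `0 < a < b`
the convergence `φ(λt)/φ(t) → 1` (`t → ∞`) is uniform with respect to `λ ∈ [a,b]`. -/
theorem slowlyVarying_uniform_convergence (φ : ℝ → ℝ)
    (hmeas : Measurable ((Set.Ici (1 : ℝ)).restrict φ))
    (hpos : ∀ t : ℝ, 1 ≤ t → 0 < φ t)
    (hsv : SlowlyVarying φ)
    (a b : ℝ) (ha : 0 < a) (hab : a < b) :
    ∀ ε : ℝ, 0 < ε → ∃ T : ℝ, ∀ t : ℝ, T ≤ t →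
      ∀ l ∈ Set.Icc a b, |φ (l * t) / φ t - 1| < ε :=
  slowlyVarying_uniform_convergence_general φ hmeas hpos hsv a b ha
end

section
/- (Peetre's lemma, estimate from semi-Fredholmness.) Let X, Y, Z be Banach spaces (over ℝ or ℂ), let T : X → Y be a bounded linear operator whose kernel is finite-dimensional and whose range is closed, and let K : X → Z be an injective compact linear operator. Then there exists a constant c > 0 such that ‖x‖_X ≤ c(‖Tx‖_Y + ‖Kx‖_Z) for all x ∈ X. -/
/-!
Choose, by the open mapping theorem applied to `T` onto its closed (hence complete) range, a
preimage `m` of `T x` with `‖m‖ ≤ C ‖T x‖`. Then `x - m ∈ ker T`, and on the finite-dimensional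
space `ker T` the injective map `K` is bounded below, so
`‖x‖ ≤ ‖m‖ + b ‖K (x - m)‖ ≤ (1 + b ‖K‖) C ‖T x‖ + b ‖K x‖`.
-/

open scoped NNReal

theorem ContinuousLinearMap.exists_preimage_norm_le_of_isClosed_range {𝕜 E F : Type*}
    [NontriviallyNormedField 𝕜] [NormedAddCommGroup E] [NormedSpace 𝕜 E] [CompleteSpace E]
    [NormedAddCommGroup F] [NormedSpace 𝕜 F] [CompleteSpace F]
    (f : E →L[𝕜] F) (hf : IsClosed (Set.range f)) :
    ∃ C > 0, ∀ x, ∃ x', f x' = f x ∧ ‖x'‖ ≤ C * ‖f x‖ := by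
  have : IsClosed ((f : E →ₗ[𝕜] F).range : Set F) := by rwa [LinearMap.coe_range]
  let f' : E →L[𝕜] (f : E →ₗ[𝕜] F).range := f.codRestrict _ (LinearMap.mem_range_self _)
  obtain ⟨C, hC, hf'⟩ := f'.exists_preimage_norm_le fun ⟨_, x, rfl⟩ ↦ ⟨x, rfl⟩
  refine ⟨C, hC, fun x ↦ ?_⟩
  obtain ⟨x', hx', hx'C⟩ := hf' (f' x)
  exact ⟨x', congr_arg Subtype.val hx', hx'C⟩

theorem LinearMap.exists_norm_le_mul_norm_of_injOn {𝕜 E F : Type*}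
    [NontriviallyNormedField 𝕜] [CompleteSpace 𝕜]
    [NormedAddCommGroup E] [NormedSpace 𝕜 E] [NormedAddCommGroup F] [NormedSpace 𝕜 F]
    (g : E →ₗ[𝕜] F) (V : Submodule 𝕜 E) [FiniteDimensional 𝕜 V] (hg : Set.InjOn g V) :
    ∃ b : ℝ≥0, ∀ x ∈ V, ‖x‖ ≤ b * ‖g x‖ := by
  have hker : LinearMap.ker (g.comp V.subtype) = ⊥ :=
    LinearMap.ker_eq_bot.mpr fun x y h ↦ Subtype.ext (hg x.2 y.2 h)
  obtain ⟨b, -, hb⟩ := (g.comp V.subtype).exists_antilipschitzWith hker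
  refine ⟨b, fun x hx ↦ ?_⟩
  simpa [dist_eq_norm] using hb.le_mul_dist ⟨x, hx⟩ 0

theorem peetre_lemma_estimate_general {𝕜 X Y Z : Type*} [RCLike 𝕜]
    [NormedAddCommGroup X] [NormedSpace 𝕜 X] [CompleteSpace X]
    [NormedAddCommGroup Y] [NormedSpace 𝕜 Y] [CompleteSpace Y]
    [NormedAddCommGroup Z] [NormedSpace 𝕜 Z]
    (T : X →L[𝕜] Y) (K : X →L[𝕜] Z)
    (hker : FiniteDimensional 𝕜 (LinearMap.ker (T : X →ₗ[𝕜] Y)))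
    (hrange : IsClosed (Set.range T))
    (hKinj : Function.Injective K) :
    ∃ c : ℝ, 0 < c ∧ ∀ x : X, ‖x‖ ≤ c * (‖T x‖ + ‖K x‖) := by
  obtain ⟨C, hC, hT⟩ := T.exists_preimage_norm_le_of_isClosed_range hrange
  obtain ⟨b, hK⟩ :=
    (K : X →ₗ[𝕜] Z).exists_norm_le_mul_norm_of_injOn (LinearMap.ker (T : X →ₗ[𝕜] Y)) hKinj.injOn
  refine ⟨(1 + b * ‖K‖) * C + b, by positivity, fun x ↦ ?_⟩
  obtain ⟨m, hm, hmC⟩ := hT x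
  have hxm : ‖x - m‖ ≤ b * (‖K x‖ + ‖K‖ * ‖m‖) :=
    calc ‖x - m‖ ≤ b * ‖K (x - m)‖ := hK _ (by simp [hm])
      _ ≤ b * (‖K x‖ + ‖K‖ * ‖m‖) := by
        rw [map_sub]
        gcongr
        exact (norm_sub_le _ _).trans (by gcongr; exact K.le_opNorm m)
  calc ‖x‖ ≤ ‖m‖ + ‖x - m‖ := norm_le_norm_add_norm_sub' x m
    _ ≤ (1 + b * ‖K‖) * ‖m‖ + b * ‖K x‖ := by linarith
    _ ≤ (1 + b * ‖K‖) * (C * ‖T x‖) + b * ‖K x‖ := by gcongr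
    _ ≤ ((1 + b * ‖K‖) * C + b) * (‖T x‖ + ‖K x‖) := by
      have hKC : 0 ≤ (1 + b * ‖K‖) * C := by positivity
      nlinarith [mul_nonneg hKC (norm_nonneg (K x)),
        mul_nonneg b.coe_nonneg (norm_nonneg (T x))]

/-- **Peetre's lemma** (estimate from semi-Fredholmness).  Let `X, Y, Z` be Banach spaces over
`ℝ` or `ℂ`, let `T : X → Y` be a bounded linear operator with finite-dimensional kernel and
closed range, and let `K : X → Z` be an injective compact linear operator.  Then there is
`c > 0` with `‖x‖ ≤ c (‖Tx‖ + ‖Kx‖)` for all `x ∈ X`. -/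
theorem peetre_lemma_estimate {𝕜 X Y Z : Type*} [RCLike 𝕜]
    [NormedAddCommGroup X] [NormedSpace 𝕜 X] [CompleteSpace X]
    [NormedAddCommGroup Y] [NormedSpace 𝕜 Y] [CompleteSpace Y]
    [NormedAddCommGroup Z] [NormedSpace 𝕜 Z] [CompleteSpace Z]
    (T : X →L[𝕜] Y) (K : X →L[𝕜] Z)
    (hker : FiniteDimensional 𝕜 (LinearMap.ker (T : X →ₗ[𝕜] Y)))
    (hrange : IsClosed (Set.range T))
    (hKcompact : IsCompactOperator K)
    (hKinj : Function.Injective K) :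
    ∃ c : ℝ, 0 < c ∧ ∀ x : X, ‖x‖ ≤ c * (‖T x‖ + ‖K x‖) :=
  peetre_lemma_estimate_general T K hker hrange hKinj
end

section
/- (Peetre's lemma, converse direction.) Let X, Y, Z be Banach spaces (over ℝ or ℂ), let T : X → Y be a bounded linear operator, and let K : X → Z be a compact linear operator. Suppose there exists c > 0 such that ‖x‖_X ≤ c(‖Tx‖_Y + ‖Kx‖_Z) for all x ∈ X. Then the kernel of T is finite-dimensional and the range of T is closed in Y. -/
/-!
The estimate makes `x ↦ (T x, K x)` antilipschitz, hence a closed embedding of the Banach space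
`X`, so a bounded set whose `T`-image is relatively compact is itself relatively compact (its
`K`-image is, by compactness of `K`). Applied to the unit ball of `ker T`, this and Riesz's
theorem give `dim ker T < ∞`. Then `ker T` has a closed complement `M`, and a sequence on the
unit sphere of `M` along which `T` tends to `0` would have a limit point: a unit vector in
`ker T ∩ M = 0`. So `T` is bounded below on `M`, and `range T = T(M)` is closed.
-/

open Metric Filter Topology Bornology

theorem LinearMap.range_comp_subtype_of_codisjoint_ker {R M N : Type*} [Semiring R]
    [AddCommMonoid M] [Module R M] [AddCommMonoid N] [Module R N] {f : M →ₗ[R] N}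
    {p : Submodule R M} (h : Codisjoint (LinearMap.ker f) p) :
    Set.range (f ∘ p.subtype) = Set.range f := by
  refine subset_antisymm (Set.range_comp_subset_range _ _) ?_
  rintro _ ⟨x, rfl⟩
  obtain ⟨k, hk, m, hm, rfl⟩ := Submodule.mem_sup.1 (h.eq_top ▸ Submodule.mem_top : x ∈ _)
  exact ⟨⟨m, hm⟩, by simp [LinearMap.mem_ker.1 hk]⟩

namespace Peetre

section NontriviallyNormedField

variable {𝕜 E F G : Type*} [NontriviallyNormedField 𝕜]
  [NormedAddCommGroup E] [NormedSpace 𝕜 E]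
  [NormedAddCommGroup F] [NormedSpace 𝕜 F]
  [NormedAddCommGroup G] [NormedSpace 𝕜 G]
  {T : E →L[𝕜] F} {K : E →L[𝕜] G} {c : ℝ}

theorem antilipschitz_prod (hest : ∀ x, ‖x‖ ≤ c * (‖T x‖ + ‖K x‖)) :
    AntilipschitzWith (2 * c.toNNReal) (T.prod K) := by
  refine (T.prod K).antilipschitz_of_bound fun x ↦ ?_
  have hsum : ‖T x‖ + ‖K x‖ ≤ 2 * ‖T.prod K x‖ := by
    rw [ContinuousLinearMap.prod_apply, Prod.norm_def, two_mul]
    exact add_le_add (le_max_left _ _) (le_max_right _ _)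
  calc ‖x‖ ≤ c.toNNReal * (‖T x‖ + ‖K x‖) :=
        (hest x).trans (by gcongr; exact Real.le_coe_toNNReal c)
    _ ≤ c.toNNReal * (2 * ‖T.prod K x‖) := by gcongr
    _ = ↑(2 * c.toNNReal) * ‖T.prod K x‖ := by push_cast; ring

theorem isCompact_closure [CompleteSpace E] (hK : IsCompactOperator K)
    (hest : ∀ x, ‖x‖ ≤ c * (‖T x‖ + ‖K x‖)) {s : Set E} (hs : IsBounded s)
    (hTs : IsCompact (closure (T '' s))) : IsCompact (closure s) := by
  have hemb := (antilipschitz_prod hest).isClosedEmbedding (T.prod K).uniformContinuous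
  have hC : IsCompact (closure (T '' s) ×ˢ closure (K '' s)) :=
    hTs.prod (hK.isCompact_closure_image_of_bounded hs)
  refine (hemb.isCompact_preimage hC).of_isClosed_subset isClosed_closure ?_
  refine closure_minimal (fun x hx ↦ ?_) (hC.isClosed.preimage hemb.continuous)
  exact ⟨subset_closure ⟨x, hx, rfl⟩, subset_closure ⟨x, hx, rfl⟩⟩

theorem finiteDimensional_ker [CompleteSpace 𝕜] [CompleteSpace E] (hK : IsCompactOperator K)
    (hest : ∀ x, ‖x‖ ≤ c * (‖T x‖ + ‖K x‖)) :
    FiniteDimensional 𝕜 (LinearMap.ker (T : E →ₗ[𝕜] F)) := by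
  set s : Set E := closedBall 0 1 ∩ LinearMap.ker (T : E →ₗ[𝕜] F)
  have hTs : IsCompact (closure (T '' s)) := by
    refine ((Set.subsingleton_singleton (a := (0 : F))).anti ?_).closure.isCompact
    rintro _ ⟨x, ⟨-, hx⟩, rfl⟩
    exact (hx : T x = 0)
  have hs : IsCompact s := by
    simpa only [(isClosed_closedBall.inter T.isClosed_ker).closure_eq] using
      isCompact_closure hK hest (isBounded_closedBall.subset Set.inter_subset_left) hTs
  refine FiniteDimensional.of_isCompact_closedBall₀ 𝕜 one_pos ?_
  have hpre : closedBall (0 : LinearMap.ker (T : E →ₗ[𝕜] F)) 1 = Subtype.val ⁻¹' s := by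
    ext x
    simp [s]
  rw [hpre]
  exact IsInducing.subtypeVal.isCompact_preimage' hs
    (by rw [Subtype.range_coe_subtype]; exact Set.inter_subset_right)

end NontriviallyNormedField

section RCLike

variable {𝕜 E F G : Type*} [RCLike 𝕜]
  [NormedAddCommGroup E] [NormedSpace 𝕜 E] [CompleteSpace E]
  [NormedAddCommGroup F] [NormedSpace 𝕜 F]
  [NormedAddCommGroup G] [NormedSpace 𝕜 G]
  {T : E →L[𝕜] F} {K : E →L[𝕜] G} {c : ℝ}

theorem exists_antilipschitzWith (hK : IsCompactOperator K)
    (hest : ∀ x, ‖x‖ ≤ c * (‖T x‖ + ‖K x‖)) (hT : Function.Injective T) :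
    ∃ d, AntilipschitzWith d T := by
  rw [antilipschitzWith_iff_exists_mul_le_norm]
  by_contra! hbelow
  have hunit (n : ℕ) : ∃ y : E, ‖y‖ = 1 ∧ ‖T y‖ < 1 / ((n : ℝ) + 1) := by
    obtain ⟨x, hx⟩ := hbelow (1 / ((n : ℝ) + 1)) (by positivity)
    have hx0 : x ≠ 0 := by
      rintro rfl
      simp at hx
    refine ⟨(‖x‖⁻¹ : 𝕜) • x, norm_smul_inv_norm hx0, ?_⟩
    rw [map_smul, norm_smul, norm_inv, RCLike.norm_ofReal, abs_norm,
      inv_mul_lt_iff₀ (norm_pos_iff.2 hx0)]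
    linarith
  choose y hy hTy using hunit
  have hTy0 : Tendsto (fun n ↦ T (y n)) atTop (𝓝 0) :=
    squeeze_zero_norm (fun n ↦ (hTy n).le) tendsto_one_div_add_atTop_nhds_zero_nat
  have hcpt : IsCompact (closure (Set.range y)) := by
    refine isCompact_closure hK hest ((isBounded_sphere (x := (0 : E)) (r := 1)).subset ?_) ?_
    · rintro _ ⟨n, rfl⟩
      simp [hy n]
    · rw [← Set.range_comp]
      exact hTy0.isCompact_insert_range.of_isClosed_subset isClosed_closure
        (closure_minimal (Set.subset_insert _ _) hTy0.isCompact_insert_range.isClosed)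
  obtain ⟨x, -, φ, hφ, hyx⟩ := hcpt.tendsto_subseq fun n ↦ subset_closure (Set.mem_range_self n)
  have hx1 : 1 = ‖x‖ := by simpa [Function.comp_def, hy] using hyx.norm
  have hTx : T x = 0 :=
    tendsto_nhds_unique ((T.continuous.tendsto x).comp hyx) (hTy0.comp hφ.tendsto_atTop)
  simp [hT (hTx.trans (map_zero T).symm)] at hx1

theorem isClosed_range (hK : IsCompactOperator K) (hest : ∀ x, ‖x‖ ≤ c * (‖T x‖ + ‖K x‖)) :
    IsClosed (Set.range T) := by
  have := finiteDimensional_ker hK hest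
  obtain ⟨M, hM, hcompl⟩ := (Submodule.ClosedComplemented.of_finiteDimensional
    (LinearMap.ker (T : E →ₗ[𝕜] F))).exists_isClosed_isCompl
  have : CompleteSpace M := hM.completeSpace_coe
  have hinj : Function.Injective (T ∘L M.subtypeL) := by
    refine (injective_iff_map_eq_zero _).2 fun x hx ↦ ?_
    exact Subtype.ext (Submodule.disjoint_def.1 hcompl.disjoint x hx x.2)
  obtain ⟨d, hd⟩ := exists_antilipschitzWith (T := T ∘L M.subtypeL) (K := K ∘L M.subtypeL)
    (hK.comp_clm M.subtypeL) (fun x ↦ hest x) hinj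
  have hrange : Set.range (T ∘L M.subtypeL) = Set.range T :=
    LinearMap.range_comp_subtype_of_codisjoint_ker hcompl.codisjoint
  rw [← hrange]
  exact hd.isClosed_range (T ∘L M.subtypeL).uniformContinuous

end RCLike

end Peetre

theorem peetre_lemma_converse_general {𝕜 X Y Z : Type*} [RCLike 𝕜]
    [NormedAddCommGroup X] [NormedSpace 𝕜 X] [CompleteSpace X]
    [NormedAddCommGroup Y] [NormedSpace 𝕜 Y]
    [NormedAddCommGroup Z] [NormedSpace 𝕜 Z]
    (T : X →L[𝕜] Y) (K : X →L[𝕜] Z)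
    (hKcompact : IsCompactOperator K)
    (c : ℝ)
    (hest : ∀ x : X, ‖x‖ ≤ c * (‖T x‖ + ‖K x‖)) :
    FiniteDimensional 𝕜 (LinearMap.ker (T : X →ₗ[𝕜] Y)) ∧ IsClosed (Set.range T) :=
  ⟨Peetre.finiteDimensional_ker hKcompact hest, Peetre.isClosed_range hKcompact hest⟩

/-- **Peetre's lemma** (converse direction).  Let `X, Y, Z` be Banach spaces over `ℝ` or `ℂ`,
`T : X → Y` a bounded linear operator, and `K : X → Z` a compact linear operator.  If there is
`c > 0` with `‖x‖ ≤ c (‖Tx‖ + ‖Kx‖)` for all `x ∈ X`, then the kernel of `T` is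
finite-dimensional and the range of `T` is closed in `Y`. -/
theorem peetre_lemma_converse {𝕜 X Y Z : Type*} [RCLike 𝕜]
    [NormedAddCommGroup X] [NormedSpace 𝕜 X] [CompleteSpace X]
    [NormedAddCommGroup Y] [NormedSpace 𝕜 Y] [CompleteSpace Y]
    [NormedAddCommGroup Z] [NormedSpace 𝕜 Z] [CompleteSpace Z]
    (T : X →L[𝕜] Y) (K : X →L[𝕜] Z)
    (hKcompact : IsCompactOperator K)
    (c : ℝ) (hc : 0 < c)
    (hest : ∀ x : X, ‖x‖ ≤ c * (‖T x‖ + ‖K x‖)) :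
    FiniteDimensional 𝕜 (LinearMap.ker (T : X →ₗ[𝕜] Y)) ∧ IsClosed (Set.range T) :=
  peetre_lemma_converse_general T K hKcompact c hest
end

section
/- (Hohberg–Krein-type lemma.) Let X and Y be Banach spaces (over ℝ or ℂ), let T : X → Y be a bounded linear operator whose range is closed and has finite codimension in Y, and let D be a dense linear subspace of Y. Then there exists a finite-dimensional linear subspace F ⊆ D such that Range(T) + F = Y. In particular, every y ∈ Y can be written as y = Tx + d with x ∈ X and d ∈ D. -/
/-!
Every subspace containing the closed range `R` of `T` is closed, because `Y ⧸ R` is a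
finite-dimensional Hausdorff space. So `R ⊔ D` is closed and dense, hence all of `Y`; then
a finite spanning set of `Y ⧸ R` lifts to a finite subset of `D`, whose span is `F`.
-/

namespace Submodule

theorem exists_fg_le_sup_eq_top {R M : Type*} [Ring R] [AddCommGroup M] [Module R M]
    {N D : Submodule R M} [Module.Finite R (M ⧸ N)] (h : N ⊔ D = ⊤) :
    ∃ F ≤ D, F.FG ∧ N ⊔ F = ⊤ := by
  obtain ⟨S, hS, hspan⟩ := fg_def.1 (Module.Finite.fg_top (R := R) (M := M ⧸ N))
  have hD : N.mkQ '' D = Set.univ := by rw [← map_coe, (map_mkQ_eq_top N D).2 h, top_coe]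
  obtain ⟨T, hTD, hT, hspanT⟩ := Set.exists_subset_image_finite_and (p := fun S ↦ span R S = ⊤)
    |>.1 ⟨S, hD ▸ Set.subset_univ S, hS, hspan⟩
  refine ⟨span R T, span_le.2 hTD, fg_span hT, ?_⟩
  rw [← map_mkQ_eq_top, map_span, hspanT]

theorem sup_eq_top_of_isClosed_of_dense {𝕜 E : Type*} [NontriviallyNormedField 𝕜]
    [CompleteSpace 𝕜] [AddCommGroup E] [TopologicalSpace E] [IsTopologicalAddGroup E]
    [Module 𝕜 E] [ContinuousSMul 𝕜 E] {N D : Submodule 𝕜 E} [FiniteDimensional 𝕜 (E ⧸ N)]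
    (hN : IsClosed (N : Set E)) (hD : Dense (D : Set E)) : N ⊔ D = ⊤ := by
  have hclosed := isClosed_mono_of_finiteDimensional_quotient hN (le_sup_left : N ≤ N ⊔ D)
  have hdense : Dense ((N ⊔ D : Submodule 𝕜 E) : Set E) :=
    hD.mono (SetLike.coe_subset_coe.2 le_sup_right)
  rw [← SetLike.coe_set_eq, top_coe, ← hclosed.closure_eq, hdense.closure_eq]

end Submodule

theorem hohberg_krein_lemma_general {𝕜 X Y : Type*} [RCLike 𝕜]
    [NormedAddCommGroup X] [NormedSpace 𝕜 X]
    [NormedAddCommGroup Y] [NormedSpace 𝕜 Y]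
    (T : X →L[𝕜] Y)
    (hclosed : IsClosed (Set.range T))
    (hcodim : FiniteDimensional 𝕜 (Y ⧸ LinearMap.range (T : X →ₗ[𝕜] Y)))
    (D : Submodule 𝕜 Y) (hD : Dense (D : Set Y)) :
    ∃ F : Submodule 𝕜 Y, FiniteDimensional 𝕜 F ∧ F ≤ D ∧
      LinearMap.range (T : X →ₗ[𝕜] Y) ⊔ F = ⊤ ∧
      ∀ y : Y, ∃ x : X, ∃ d ∈ D, y = T x + d := by
  have hR : IsClosed (LinearMap.range (T : X →ₗ[𝕜] Y) : Set Y) := by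
    rwa [LinearMap.coe_range, ContinuousLinearMap.coe_coe]
  obtain ⟨F, hFD, hFfg, hsup⟩ :=
    Submodule.exists_fg_le_sup_eq_top (Submodule.sup_eq_top_of_isClosed_of_dense hR hD)
  refine ⟨F, .of_fg hFfg, hFD, hsup, fun y => ?_⟩
  obtain ⟨_, ⟨x, rfl⟩, f, hf, hy⟩ :=
    Submodule.mem_sup.1 (hsup ▸ Submodule.mem_top : y ∈ _ ⊔ F)
  exact ⟨x, f, hFD hf, hy.symm⟩

/-- **Hohberg–Krein-type lemma.**  Let `X, Y` be Banach spaces over `ℝ` or `ℂ`, let `T : X → Y`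
be a bounded linear operator whose range is closed and of finite codimension in `Y`, and let
`D` be a dense linear subspace of `Y`.  Then there is a finite-dimensional subspace `F ⊆ D`
with `Range(T) + F = Y`; in particular, every `y ∈ Y` is of the form `y = Tx + d` with
`x ∈ X` and `d ∈ D`. -/
theorem hohberg_krein_lemma {𝕜 X Y : Type*} [RCLike 𝕜]
    [NormedAddCommGroup X] [NormedSpace 𝕜 X] [CompleteSpace X]
    [NormedAddCommGroup Y] [NormedSpace 𝕜 Y] [CompleteSpace Y]
    (T : X →L[𝕜] Y)
    (hclosed : IsClosed (Set.range T))
    (hcodim : FiniteDimensional 𝕜 (Y ⧸ LinearMap.range (T : X →ₗ[𝕜] Y)))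
    (D : Submodule 𝕜 Y) (hD : Dense (D : Set Y)) :
    ∃ F : Submodule 𝕜 Y, FiniteDimensional 𝕜 F ∧ F ≤ D ∧
      LinearMap.range (T : X →ₗ[𝕜] Y) ⊔ F = ⊤ ∧
      ∀ y : Y, ∃ x : X, ∃ d ∈ D, y = T x + d :=
  hohberg_krein_lemma_general T hclosed hcodim D hD
end
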